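/- arXiv:1810.04283 — 8 statements merged into one kernel-verified Lean document; each statement's English description precedes it below -/
import Mathlib

section
/- Let g_1,...,g_{2n}, g_N : [0,T) → ℝ be positive differentiable functions satisfying the ODE system g_i' = g_N/g_{i+n} - ρ g_i g_N Σ and g_{i+n}' = g_N/g_i - ρ g_{i+n} g_N Σ for 1 ≤ i ≤ n, and g_N' = -(1+ρ) g_N² Σ, where Σ = Σ_{k=1}^n 1/(g_k g_{k+n}). Then for each 1 ≤ i ≤ n, the ratio g_i(t)/g_{i+n}(t) is constant in t. -/
/-!
Along the flow, `g_i' g_{i+n} = g_N - ρ g_i g_{i+n} g_N Σ = g_i g_{i+n}'`: both sides are symmetric in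
the pair `(g_i, g_{i+n})`. Hence the quotient rule gives `(g_i / g_{i+n})' = 0`, and the ratio is
constant on the interval `[0, T)`.
-/

open Set

theorem Convex.eq_of_hasDerivAt_zero {E : Type*} [NormedAddCommGroup E] [NormedSpace ℝ E]
    {f : ℝ → E} {s : Set ℝ} (hs : Convex ℝ s) (hf : ∀ x ∈ s, HasDerivAt f 0 x)
    {x y : ℝ} (hx : x ∈ s) (hy : y ∈ s) : f y = f x := by
  have h := norm_image_sub_le_of_norm_hasDerivWithin_le (fun z hz => (hf z hz).hasDerivWithinAt)
    (fun _ _ => norm_zero.le) hs hx hy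
  rwa [zero_mul, norm_le_zero_iff, sub_eq_zero] at h

theorem hasDerivAt_div_eq_zero_of_mul_eq {f h : ℝ → ℝ} {f' h' x : ℝ}
    (hf : HasDerivAt f f' x) (hh : HasDerivAt h h' x) (hx : h x ≠ 0)
    (hcross : f' * h x = f x * h') : HasDerivAt (fun s => f s / h s) 0 x :=
  (hf.div hh hx).congr_deriv (by rw [hcross, sub_self, zero_div])

theorem hasDerivAt_div_eq_zero_of_symmetric_system {f h : ℝ → ℝ} {a c x : ℝ}
    (hfx : f x ≠ 0) (hhx : h x ≠ 0)
    (hf : HasDerivAt f (a / h x - c * f x) x) (hh : HasDerivAt h (a / f x - c * h x) x) :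
    HasDerivAt (fun s => f s / h s) 0 x :=
  hasDerivAt_div_eq_zero_of_mul_eq hf hh hhx (by field_simp)

theorem heisenberg_RB_ratio_const_general (n : ℕ) (T ρ : ℝ)
    (g : ℕ → ℝ → ℝ) (gN : ℝ → ℝ) (S : ℝ → ℝ)
    (hpos : ∀ j ∈ Finset.Icc 1 (2 * n), ∀ t ∈ Set.Ico (0 : ℝ) T, 0 < g j t)
    (hode1 : ∀ i ∈ Finset.Icc 1 n, ∀ t ∈ Set.Ico (0 : ℝ) T,
      HasDerivAt (g i) (gN t / g (i + n) t - ρ * g i t * gN t * S t) t)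
    (hode2 : ∀ i ∈ Finset.Icc 1 n, ∀ t ∈ Set.Ico (0 : ℝ) T,
      HasDerivAt (g (i + n)) (gN t / g i t - ρ * g (i + n) t * gN t * S t) t) :
    ∀ i ∈ Finset.Icc 1 n, ∀ t ∈ Set.Ico (0 : ℝ) T,
      g i t / g (i + n) t = g i 0 / g (i + n) 0 := by
  intro i hi t ht
  have hi_mem : i ∈ Finset.Icc 1 (2 * n) := by simp only [Finset.mem_Icc] at hi ⊢; omega
  have hin_mem : i + n ∈ Finset.Icc 1 (2 * n) := by simp only [Finset.mem_Icc] at hi ⊢; omega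
  have hratio : ∀ x ∈ Ico (0 : ℝ) T, HasDerivAt (fun s => g i s / g (i + n) s) 0 x :=
    fun x hx => hasDerivAt_div_eq_zero_of_symmetric_system (c := ρ * gN x * S x)
      (hpos i hi_mem x hx).ne' (hpos (i + n) hin_mem x hx).ne'
      ((hode1 i hi x hx).congr_deriv (by ring)) ((hode2 i hi x hx).congr_deriv (by ring))
  exact (convex_Ico 0 T).eq_of_hasDerivAt_zero hratio ⟨le_rfl, ht.1.trans_lt ht.2⟩ ht

/-- Ricci-Bourguignon flow on the Heisenberg group `H_n` (diagonal metric):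
the ratios `g_i / g_{i+n}` are constant along the flow. -/
theorem heisenberg_RB_ratio_const (n : ℕ) (hn : 1 ≤ n) (T ρ : ℝ) (hT : 0 < T)
    (g : ℕ → ℝ → ℝ) (gN : ℝ → ℝ) (S : ℝ → ℝ)
    (hS : ∀ t, S t = ∑ k ∈ Finset.Icc 1 n, 1 / (g k t * g (k + n) t))
    (hpos : ∀ j ∈ Finset.Icc 1 (2 * n), ∀ t ∈ Set.Ico (0 : ℝ) T, 0 < g j t)
    (hposN : ∀ t ∈ Set.Ico (0 : ℝ) T, 0 < gN t)
    (hode1 : ∀ i ∈ Finset.Icc 1 n, ∀ t ∈ Set.Ico (0 : ℝ) T,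
      HasDerivAt (g i) (gN t / g (i + n) t - ρ * g i t * gN t * S t) t)
    (hode2 : ∀ i ∈ Finset.Icc 1 n, ∀ t ∈ Set.Ico (0 : ℝ) T,
      HasDerivAt (g (i + n)) (gN t / g i t - ρ * g (i + n) t * gN t * S t) t)
    (hodeN : ∀ t ∈ Set.Ico (0 : ℝ) T,
      HasDerivAt gN (-(1 + ρ) * (gN t) ^ 2 * S t) t) :
    ∀ i ∈ Finset.Icc 1 n, ∀ t ∈ Set.Ico (0 : ℝ) T,
      g i t / g (i + n) t = g i 0 / g (i + n) 0 :=
  heisenberg_RB_ratio_const_general n T ρ g gN S hpos hode1 hode2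
end

section
/- Let g_1,...,g_{2n}, g_N : [0,T) → ℝ be positive differentiable functions satisfying g_i' = g_N/g_{i+n} - ρ g_i g_N Σ, g_{i+n}' = g_N/g_i - ρ g_{i+n} g_N Σ (1 ≤ i ≤ n), and g_N' = -(1+ρ) g_N² Σ, where Σ = Σ_{k=1}^n 1/(g_k g_{k+n}) and ρ ≠ -1. Then the quantity g_1(t)···g_n(t)·g_N(t)^{(1-nρ)/(1+ρ)} is constant in t. -/
/-!
Along the flow, `(log g_k)' = g_N / (g_k g_{k+n}) - ρ g_N Σ`, so summing over `k ≤ n` gives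
`(log (g_1 ⋯ g_n))' = (1 - nρ) g_N Σ`, while `(log g_N)' = -(1 + ρ) g_N Σ`. The exponent
`(1 - nρ)/(1 + ρ)` is chosen so that these two logarithmic derivatives cancel.
-/

open Finset

theorem eq_of_hasDerivAt_zero_on_Ico {F : ℝ → ℝ} {a b : ℝ}
    (hF : ∀ t ∈ Set.Ico a b, HasDerivAt F 0 t) : ∀ t ∈ Set.Ico a b, F t = F a := by
  intro t ht
  have hsub : Set.Icc a t ⊆ Set.Ico a b := fun s hs => ⟨hs.1, hs.2.trans_lt ht.2⟩
  exact constant_of_has_deriv_right_zero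
    (fun s hs => (hF s (hsub hs)).continuousAt.continuousWithinAt)
    (fun s hs => (hF s (hsub (Set.Ico_subset_Icc_self hs))).hasDerivWithinAt) t ⟨ht.1, le_rfl⟩

theorem HasDerivAt.fun_finsetProd_of_ne_zero {ι : Type*} [DecidableEq ι] {s : Finset ι}
    {f : ι → ℝ → ℝ} {f' : ι → ℝ} {t : ℝ} (hf : ∀ i ∈ s, HasDerivAt (f i) (f' i) t)
    (hf0 : ∀ i ∈ s, f i t ≠ 0) :
    HasDerivAt (fun x => ∏ i ∈ s, f i x) ((∏ i ∈ s, f i t) * ∑ i ∈ s, f' i / f i t) t := by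
  refine (HasDerivAt.fun_finsetProd hf).congr_deriv ?_
  rw [mul_sum]
  refine sum_congr rfl fun i hi => ?_
  rw [smul_eq_mul, ← prod_erase_mul s _ hi]
  field_simp [hf0 i hi]

theorem HasDerivAt.rpow_const_of_pos {f : ℝ → ℝ} {f' α t : ℝ} (hf : HasDerivAt f f' t)
    (hpos : 0 < f t) :
    HasDerivAt (fun x => f x ^ α) (f t ^ α * (α * (f' / f t))) t := by
  convert hf.rpow_const (p := α) (Or.inl hpos.ne') using 1
  rw [Real.rpow_sub_one hpos.ne']
  ring

theorem sum_heisenberg_logDeriv_eq {ι : Type*} (s : Finset ι) (a b : ι → ℝ) (c ρ : ℝ)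
    (ha : ∀ k ∈ s, a k ≠ 0) (hb : ∀ k ∈ s, b k ≠ 0) :
    ∑ k ∈ s, (c / b k - ρ * a k * c * ∑ j ∈ s, 1 / (a j * b j)) / a k
      = (1 - #s * ρ) * c * ∑ j ∈ s, 1 / (a j * b j) := by
  have hterm : ∀ k ∈ s, (c / b k - ρ * a k * c * ∑ j ∈ s, 1 / (a j * b j)) / a k
      = c * (1 / (a k * b k)) - ρ * c * ∑ j ∈ s, 1 / (a j * b j) := fun k hk => by
    field_simp [ha k hk, hb k hk]
  rw [sum_congr rfl hterm, sum_sub_distrib, ← mul_sum, sum_const, nsmul_eq_mul]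
  ring

theorem heisenberg_RB_conserved_general (n : ℕ) (T ρ : ℝ)
    (hρ : ρ ≠ -1)
    (g : ℕ → ℝ → ℝ) (gN : ℝ → ℝ) (S : ℝ → ℝ)
    (hS : ∀ t, S t = ∑ k ∈ Finset.Icc 1 n, 1 / (g k t * g (k + n) t))
    (hpos : ∀ j ∈ Finset.Icc 1 (2 * n), ∀ t ∈ Set.Ico (0 : ℝ) T, 0 < g j t)
    (hposN : ∀ t ∈ Set.Ico (0 : ℝ) T, 0 < gN t)
    (hode1 : ∀ i ∈ Finset.Icc 1 n, ∀ t ∈ Set.Ico (0 : ℝ) T,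
      HasDerivAt (g i) (gN t / g (i + n) t - ρ * g i t * gN t * S t) t)
    (hodeN : ∀ t ∈ Set.Ico (0 : ℝ) T,
      HasDerivAt gN (-(1 + ρ) * (gN t) ^ 2 * S t) t) :
    ∀ t ∈ Set.Ico (0 : ℝ) T,
      (∏ k ∈ Finset.Icc 1 n, g k t) * gN t ^ ((1 - (n : ℝ) * ρ) / (1 + ρ))
        = (∏ k ∈ Finset.Icc 1 n, g k 0) * gN 0 ^ ((1 - (n : ℝ) * ρ) / (1 + ρ)) := by
  refine eq_of_hasDerivAt_zero_on_Ico fun t ht => ?_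
  have hg : ∀ k ∈ Icc 1 n, g k t ≠ 0 := fun k hk =>
    (hpos k (by simp only [mem_Icc] at hk ⊢; omega) t ht).ne'
  have hgn : ∀ k ∈ Icc 1 n, g (k + n) t ≠ 0 := fun k hk =>
    (hpos (k + n) (by simp only [mem_Icc] at hk ⊢; omega) t ht).ne'
  have hprod := HasDerivAt.fun_finsetProd_of_ne_zero (fun k hk => hode1 k hk t ht) hg
  have hpow := (hodeN t ht).rpow_const_of_pos (α := (1 - (n : ℝ) * ρ) / (1 + ρ)) (hposN t ht)
  refine (hprod.mul hpow).congr_deriv ?_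
  have h1ρ : (1 : ℝ) + ρ ≠ 0 := fun h => hρ (by linarith)
  rw [hS t, sum_heisenberg_logDeriv_eq _ _ _ _ _ hg hgn, Nat.card_Icc, Nat.add_sub_cancel]
  field_simp [(hposN t ht).ne']
  ring

/-- Ricci-Bourguignon flow on the Heisenberg group `H_n`:
`g_1 ⋯ g_n ⋅ g_N ^ ((1 - nρ)/(1 + ρ))` is constant along the flow (for `ρ ≠ -1`). -/
theorem heisenberg_RB_conserved (n : ℕ) (hn : 1 ≤ n) (T ρ : ℝ) (hT : 0 < T)
    (hρ : ρ ≠ -1)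
    (g : ℕ → ℝ → ℝ) (gN : ℝ → ℝ) (S : ℝ → ℝ)
    (hS : ∀ t, S t = ∑ k ∈ Finset.Icc 1 n, 1 / (g k t * g (k + n) t))
    (hpos : ∀ j ∈ Finset.Icc 1 (2 * n), ∀ t ∈ Set.Ico (0 : ℝ) T, 0 < g j t)
    (hposN : ∀ t ∈ Set.Ico (0 : ℝ) T, 0 < gN t)
    (hode1 : ∀ i ∈ Finset.Icc 1 n, ∀ t ∈ Set.Ico (0 : ℝ) T,
      HasDerivAt (g i) (gN t / g (i + n) t - ρ * g i t * gN t * S t) t)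
    (hode2 : ∀ i ∈ Finset.Icc 1 n, ∀ t ∈ Set.Ico (0 : ℝ) T,
      HasDerivAt (g (i + n)) (gN t / g i t - ρ * g (i + n) t * gN t * S t) t)
    (hodeN : ∀ t ∈ Set.Ico (0 : ℝ) T,
      HasDerivAt gN (-(1 + ρ) * (gN t) ^ 2 * S t) t) :
    ∀ t ∈ Set.Ico (0 : ℝ) T,
      (∏ k ∈ Finset.Icc 1 n, g k t) * gN t ^ ((1 - (n : ℝ) * ρ) / (1 + ρ))
        = (∏ k ∈ Finset.Icc 1 n, g k 0) * gN 0 ^ ((1 - (n : ℝ) * ρ) / (1 + ρ)) :=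
  heisenberg_RB_conserved_general n T ρ hρ g gN S hS hpos hposN hode1 hodeN
end

section
/- Let g_1,...,g_{2n}, g_N : [0,∞) → ℝ be positive differentiable functions satisfying the Heisenberg Ricci-Bourguignon flow system with parameter ρ < 0 (so Σ = Σ_{k=1}^n 1/(g_k g_{k+n}) is positive and nonincreasing and each g_j, 1 ≤ j ≤ 2n, is nondecreasing). Then g_N(t) ≥ 1/(Σ(0) t + g_N(0)^{-1}) for all t ≥ 0, and consequently ∫_0^t g_N(r) dr → ∞ as t → ∞. -/
/-!
For `ρ < 0` the right-hand sides of the equations for `g_i` and `g_{i+n}` are positive, so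
every `g_j` is nondecreasing and `Σ` is nonincreasing; in particular `Σ t ≤ Σ 0`. The equation
for `g_N` says `(1 / g_N)' = (1 + ρ) Σ ≤ Σ 0`, hence `1 / g_N t ≤ Σ 0 t + 1 / g_N 0`.
Integrating this lower bound for `g_N` gives `∫_0^t g_N ≥ log (1 + Σ 0 g_N 0 t) / Σ 0 → ∞`.
-/

open Set Filter Real

theorem monotoneOn_Ici_of_hasDerivAt_nonneg {f f' : ℝ → ℝ} {a : ℝ}
    (hf : ∀ t ∈ Ici a, HasDerivAt f (f' t) t) (hf' : ∀ t ∈ Ioi a, 0 ≤ f' t) :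
    MonotoneOn f (Ici a) :=
  monotoneOn_of_hasDerivWithinAt_nonneg (convex_Ici a)
    (fun t ht => (hf t ht).continuousAt.continuousWithinAt)
    (fun t ht => (hf t (interior_subset ht)).hasDerivWithinAt)
    (fun t ht => hf' t (by rwa [interior_Ici] at ht))

theorem inv_mul_add_inv_le_of_hasDerivAt_neg_mul_sq {u c : ℝ → ℝ} {C : ℝ}
    (hu : ∀ t ∈ Ici (0 : ℝ), 0 < u t)
    (hu' : ∀ t ∈ Ici (0 : ℝ), HasDerivAt u (-c t * u t ^ 2) t)
    (hc : ∀ t ∈ Ioi (0 : ℝ), c t ≤ C) {t : ℝ} (ht : 0 ≤ t) :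
    (C * t + (u 0)⁻¹)⁻¹ ≤ u t := by
  have hmono : MonotoneOn (fun s => C * s - (u s)⁻¹) (Ici 0) := by
    refine monotoneOn_Ici_of_hasDerivAt_nonneg (f' := fun s => C - c s) (fun s hs => ?_)
      (fun s hs => sub_nonneg.2 (hc s hs))
    refine (((hasDerivAt_id s).const_mul C).sub ((hu' s hs).inv (hu s hs).ne')).congr_deriv ?_
    field_simp [(hu s hs).ne']
  have hinv : (u t)⁻¹ ≤ C * t + (u 0)⁻¹ := by
    have := hmono self_mem_Ici ht ht
    simp only [mul_zero, zero_sub] at this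
    linarith
  exact inv_le_of_inv_le₀ (hu t ht) hinv

theorem integral_inv_mul_add {a b t : ℝ} (ha : 0 < a) (hb : 0 < b) (ht : 0 ≤ t) :
    ∫ r in (0 : ℝ)..t, (a * r + b)⁻¹ = a⁻¹ * log ((a * t + b) / b) := by
  rw [intervalIntegral.integral_comp_mul_add (fun x => x⁻¹) ha.ne', mul_zero, zero_add,
    integral_inv_of_pos hb (by positivity), smul_eq_mul]

theorem tendsto_intervalIntegral_atTop_of_inv_mul_add_le {f : ℝ → ℝ} {a b : ℝ}
    (ha : 0 < a) (hb : 0 < b) (hf : ContinuousOn f (Ici 0))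
    (hle : ∀ t ∈ Ici (0 : ℝ), (a * t + b)⁻¹ ≤ f t) :
    Tendsto (fun t => ∫ r in (0 : ℝ)..t, f r) atTop atTop := by
  have hlog : Tendsto (fun t => a⁻¹ * log ((a * t + b) / b)) atTop atTop :=
    (tendsto_log_atTop.comp ((tendsto_atTop_add_const_right _ b
      (tendsto_id.const_mul_atTop ha)).atTop_div_const hb)).const_mul_atTop (inv_pos.2 ha)
  refine tendsto_atTop_mono' _ ?_ hlog
  filter_upwards [eventually_ge_atTop 0] with t ht
  rw [← integral_inv_mul_add ha hb ht]
  refine intervalIntegral.integral_mono_on ht ?_ ?_ fun r hr => hle r hr.1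
  · refine ContinuousOn.intervalIntegrable_of_Icc ht (ContinuousOn.inv₀ (by fun_prop) ?_)
    intro r hr
    have : 0 ≤ r := hr.1
    positivity
  · exact (hf.mono Icc_subset_Ici_self).intervalIntegrable_of_Icc ht

theorem antitoneOn_sum_one_div_mul {ι : Type*} {s : Finset ι} {x y : ι → ℝ → ℝ}
    {D : Set ℝ} (hxpos : ∀ k ∈ s, ∀ t ∈ D, 0 < x k t)
    (hypos : ∀ k ∈ s, ∀ t ∈ D, 0 < y k t)
    (hx : ∀ k ∈ s, MonotoneOn (x k) D) (hy : ∀ k ∈ s, MonotoneOn (y k) D) :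
    AntitoneOn (fun t => ∑ k ∈ s, 1 / (x k t * y k t)) D :=
  fun _ ht _ ht' hle => Finset.sum_le_sum fun k hk =>
    one_div_le_one_div_of_le (mul_pos (hxpos k hk _ ht) (hypos k hk _ ht))
      (mul_le_mul (hx k hk ht ht' hle) (hy k hk ht ht' hle) (hypos k hk _ ht).le
        (hxpos k hk _ ht').le)

theorem div_sub_mul_nonneg {ρ a b N s : ℝ} (hρ : ρ ≤ 0) (ha : 0 ≤ a) (hb : 0 ≤ b)
    (hN : 0 ≤ N) (hs : 0 ≤ s) : 0 ≤ N / b - ρ * a * N * s := by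
  have := mul_nonneg (mul_nonneg (mul_nonneg (neg_nonneg.2 hρ) ha) hN) hs
  have := div_nonneg hN hb
  linarith

/-- Ricci-Bourguignon flow on the Heisenberg group with `ρ < 0`:
lower bound for `g_N` and divergence of `∫_0^t g_N`. -/
theorem heisenberg_RB_gN_lower_bound (n : ℕ) (hn : 1 ≤ n) (ρ : ℝ) (hρ : ρ < 0)
    (g : ℕ → ℝ → ℝ) (gN : ℝ → ℝ) (S : ℝ → ℝ)
    (hS : ∀ t, S t = ∑ k ∈ Finset.Icc 1 n, 1 / (g k t * g (k + n) t))
    (hpos : ∀ j ∈ Finset.Icc 1 (2 * n), ∀ t ∈ Set.Ici (0 : ℝ), 0 < g j t)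
    (hposN : ∀ t ∈ Set.Ici (0 : ℝ), 0 < gN t)
    (hode1 : ∀ i ∈ Finset.Icc 1 n, ∀ t ∈ Set.Ici (0 : ℝ),
      HasDerivAt (g i) (gN t / g (i + n) t - ρ * g i t * gN t * S t) t)
    (hode2 : ∀ i ∈ Finset.Icc 1 n, ∀ t ∈ Set.Ici (0 : ℝ),
      HasDerivAt (g (i + n)) (gN t / g i t - ρ * g (i + n) t * gN t * S t) t)
    (hodeN : ∀ t ∈ Set.Ici (0 : ℝ),
      HasDerivAt gN (-(1 + ρ) * (gN t) ^ 2 * S t) t) :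
    (∀ t ∈ Set.Ici (0 : ℝ), gN t ≥ 1 / (S 0 * t + (gN 0)⁻¹)) ∧
      Filter.Tendsto (fun t => ∫ r in (0 : ℝ)..t, gN r) Filter.atTop Filter.atTop := by
  have hmem : ∀ i ∈ Finset.Icc 1 n,
      i ∈ Finset.Icc 1 (2 * n) ∧ i + n ∈ Finset.Icc 1 (2 * n) := by
    intro i hi
    simp only [Finset.mem_Icc] at hi ⊢
    omega
  have hpos₁ i hi := hpos i (hmem i hi).1
  have hpos₂ i hi := hpos (i + n) (hmem i hi).2
  have hS_pos : ∀ t ∈ Ici (0 : ℝ), 0 < S t := fun t ht => by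
    rw [hS]
    exact Finset.sum_pos
      (fun k hk => one_div_pos.2 (mul_pos (hpos₁ k hk t ht) (hpos₂ k hk t ht)))
      (Finset.nonempty_Icc.2 hn)
  have hrate : ∀ {a b : ℝ → ℝ}, (∀ t ∈ Ici (0 : ℝ), 0 < a t) →
      (∀ t ∈ Ici (0 : ℝ), 0 < b t) →
      ∀ t ∈ Ioi (0 : ℝ), 0 ≤ gN t / b t - ρ * a t * gN t * S t := fun ha hb t ht =>
    have ht := Ioi_subset_Ici_self ht
    div_sub_mul_nonneg hρ.le (ha t ht).le (hb t ht).le (hposN t ht).le (hS_pos t ht).le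
  have hS_anti : AntitoneOn S (Ici 0) := by
    rw [funext hS]
    exact antitoneOn_sum_one_div_mul hpos₁ hpos₂
      (fun i hi => monotoneOn_Ici_of_hasDerivAt_nonneg (hode1 i hi)
        (hrate (hpos₁ i hi) (hpos₂ i hi)))
      (fun i hi => monotoneOn_Ici_of_hasDerivAt_nonneg (hode2 i hi)
        (hrate (hpos₂ i hi) (hpos₁ i hi)))
  have hbound : ∀ t ∈ Ici (0 : ℝ), (S 0 * t + (gN 0)⁻¹)⁻¹ ≤ gN t := by
    refine fun t ht =>
      inv_mul_add_inv_le_of_hasDerivAt_neg_mul_sq (c := fun s => (1 + ρ) * S s) hposN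
        (fun s hs => (hodeN s hs).congr_deriv (by ring)) (fun s hs => ?_) ht
    have hs : s ∈ Ici (0 : ℝ) := Ioi_subset_Ici_self hs
    nlinarith [hS_anti self_mem_Ici hs hs, hS_pos s hs]
  refine ⟨fun t ht => (one_div (S 0 * t + (gN 0)⁻¹)).symm ▸ hbound t ht, ?_⟩
  exact tendsto_intervalIntegral_atTop_of_inv_mul_add_le (hS_pos 0 self_mem_Ici)
    (inv_pos.2 (hposN 0 self_mem_Ici))
    (fun t ht => (hodeN t ht).continuousAt.continuousWithinAt) hbound
end

section
/- Fix n ≥ 1 and a real ρ with n + 2 - nρ > 0. Let a_j > 0 (1 ≤ j ≤ 2n) and c > 0 satisfy a_i a_{n+i} = a_1 a_{1+n} for all 1 ≤ i ≤ n, and set b = (n+2-nρ)·c/(a_1 a_{1+n}). Then the functions g_j(t) = a_j (1+bt)^{(1-nρ)/(n+2-nρ)} for 1 ≤ j ≤ 2n and g_N(t) = c (1+bt)^{(n+nρ)/(nρ-n-2)} solve the system g_i' = g_N/g_{i+n} - ρ g_i g_N Σ, g_{i+n}' = g_N/g_i - ρ g_{i+n} g_N Σ, g_N' = -(1+ρ)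 g_N² Σ on [0,∞), where Σ = Σ_{k=1}^n 1/(g_k g_{k+n}). -/
/-!
Every `g_j` is a multiple of the same power `u ^ α` of `u = 1 + b t`, with
`α = (1 - nρ)/(n + 2 - nρ)`, and the exponent of `g_N` is `2α - 1`. Because
`a_i a_{n+i}` is independent of `i`, the sum `Σ` collapses to `n / (a_1 a_{1+n} u^{2α})`,
so after dividing by the common factor `u^{α}/u` (resp. `u^{2α}/u²`) each equation of the
system becomes a polynomial identity in the constants, which the choice of `b` makes true.
-/

open Real Finset

noncomputable def rbExponent (n ρ : ℝ) : ℝ := (1 - n * ρ) / (n + 2 - n * ρ)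

lemma rbExponent_gN_eq {n ρ : ℝ} (hD : n + 2 - n * ρ ≠ 0) :
    (n + n * ρ) / (n * ρ - n - 2) = 2 * rbExponent n ρ - 1 := by
  have hD' : n * ρ - n - 2 ≠ 0 := fun h => hD (by linarith)
  rw [rbExponent, eq_sub_iff_add_eq, div_add_one hD', mul_div_assoc', div_eq_div_iff hD' hD]
  ring

lemma rpow_two_mul_sub_one {u : ℝ} (hu : 0 < u) (α : ℝ) :
    u ^ (2 * α - 1) = (u ^ α) ^ 2 / u := by
  rw [rpow_sub_one hu.ne', two_mul, rpow_add hu, sq]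

lemma hasDerivAt_one_add_mul_rpow {b t : ℝ} (p : ℝ) (h : 0 < 1 + b * t) :
    HasDerivAt (fun s => (1 + b * s) ^ p) (p * b * (1 + b * t) ^ p / (1 + b * t)) t := by
  have hlin : HasDerivAt (fun s => 1 + b * s) b t := by
    simpa using ((hasDerivAt_id t).const_mul b).const_add 1
  refine ((hasDerivAt_rpow_const (p := p) (Or.inl h.ne')).comp t hlin).congr_deriv ?_
  rw [rpow_sub_one h.ne']
  ring

lemma sum_Icc_one_div_mul_eq (n : ℕ) {a : ℕ → ℝ}
    (hprod : ∀ i ∈ Icc 1 n, a i * a (n + i) = a 1 * a (1 + n)) (v : ℝ) :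
    ∑ k ∈ Icc 1 n, 1 / (a k * v * (a (k + n) * v)) = n / (a 1 * a (1 + n) * v ^ 2) := by
  have hterm : ∀ k ∈ Icc 1 n,
      1 / (a k * v * (a (k + n) * v)) = 1 / (a 1 * a (1 + n) * v ^ 2) := by
    intro k hk
    rw [← hprod k hk, add_comm n k]
    ring
  rw [sum_congr rfl hterm, sum_const, Nat.card_Icc, nsmul_eq_mul]
  simp only [add_tsub_cancel_right]
  ring

section Flow

variable {n ρ c A b t : ℝ}

lemma hasDerivAt_rb_component {a₁ a₂ : ℝ} (ha₁ : a₁ ≠ 0) (ha₂ : a₂ ≠ 0)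
    (hpair : a₁ * a₂ = A) (hD : n + 2 - n * ρ ≠ 0) (hb : b = (n + 2 - n * ρ) * c / A)
    (hu : 0 < 1 + b * t) :
    let α := rbExponent n ρ
    HasDerivAt (fun s => a₁ * (1 + b * s) ^ α)
      (c * (1 + b * t) ^ (2 * α - 1) / (a₂ * (1 + b * t) ^ α)
        - ρ * (a₁ * (1 + b * t) ^ α) * (c * (1 + b * t) ^ (2 * α - 1))
          * (n / (A * ((1 + b * t) ^ α) ^ 2))) t := by
  intro α
  refine ((hasDerivAt_one_add_mul_rpow α hu).const_mul a₁).congr_deriv ?_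
  have hv : 0 < (1 + b * t) ^ α := rpow_pos_of_pos hu α
  rw [rpow_two_mul_sub_one hu, hb, ← hpair]
  simp only [α, rbExponent]
  field_simp

lemma hasDerivAt_rb_gN (hA : A ≠ 0) (hD : n + 2 - n * ρ ≠ 0)
    (hb : b = (n + 2 - n * ρ) * c / A) (hu : 0 < 1 + b * t) :
    let α := rbExponent n ρ
    HasDerivAt (fun s => c * (1 + b * s) ^ (2 * α - 1))
      (-(1 + ρ) * (c * (1 + b * t) ^ (2 * α - 1)) ^ 2
        * (n / (A * ((1 + b * t) ^ α) ^ 2))) t := by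
  intro α
  refine ((hasDerivAt_one_add_mul_rpow (2 * α - 1) hu).const_mul c).congr_deriv ?_
  have hv : 0 < (1 + b * t) ^ α := rpow_pos_of_pos hu α
  rw [rpow_two_mul_sub_one hu, hb]
  simp only [α, rbExponent]
  field_simp
  ring

end Flow

/-- The explicit power-law family solves the Ricci-Bourguignon flow system
on the Heisenberg group `H_n`. -/
theorem heisenberg_RB_explicit_solution (n : ℕ) (hn : 1 ≤ n) (ρ : ℝ)
    (hnρ : (0 : ℝ) < n + 2 - n * ρ)
    (a : ℕ → ℝ) (c : ℝ) (ha : ∀ j ∈ Finset.Icc 1 (2 * n), 0 < a j) (hc : 0 < c)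
    (hprod : ∀ i ∈ Finset.Icc 1 n, a i * a (n + i) = a 1 * a (1 + n))
    (b : ℝ) (hb : b = (n + 2 - n * ρ) * c / (a 1 * a (1 + n)))
    (g : ℕ → ℝ → ℝ) (gN : ℝ → ℝ) (S : ℝ → ℝ)
    (hg : ∀ j ∈ Finset.Icc 1 (2 * n), ∀ t,
      g j t = a j * (1 + b * t) ^ ((1 - n * ρ) / (n + 2 - n * ρ)))
    (hgN : ∀ t, gN t = c * (1 + b * t) ^ ((n + n * ρ) / (n * ρ - n - 2)))
    (hS : ∀ t, S t = ∑ k ∈ Finset.Icc 1 n, 1 / (g k t * g (k + n) t)) :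
    (∀ i ∈ Finset.Icc 1 n, ∀ t ∈ Set.Ici (0 : ℝ),
        HasDerivAt (g i) (gN t / g (i + n) t - ρ * g i t * gN t * S t) t ∧
        HasDerivAt (g (i + n)) (gN t / g i t - ρ * g (i + n) t * gN t * S t) t) ∧
      (∀ t ∈ Set.Ici (0 : ℝ),
        HasDerivAt gN (-(1 + ρ) * (gN t) ^ 2 * S t) t) := by
  have hD : (n : ℝ) + 2 - n * ρ ≠ 0 := hnρ.ne'
  have hmem : ∀ i ∈ Icc 1 n, i ∈ Icc 1 (2 * n) ∧ i + n ∈ Icc 1 (2 * n) := by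
    intro i hi
    simp only [mem_Icc] at hi ⊢
    omega
  have hA : 0 < a 1 * a (1 + n) := by
    obtain ⟨h1, h1n⟩ := hmem 1 (by simp [hn])
    exact mul_pos (ha 1 h1) (ha (1 + n) h1n)
  have hu : ∀ t ∈ Set.Ici (0 : ℝ), 0 < 1 + b * t := fun t ht => by
    have : 0 ≤ b := by rw [hb]; positivity
    have : (0 : ℝ) ≤ t := ht
    positivity
  have hgN' : ∀ t, gN t = c * (1 + b * t) ^ (2 * rbExponent n ρ - 1) := by
    intro t; rw [hgN, rbExponent_gN_eq hD]
  have hS' : ∀ t, S t = n / (a 1 * a (1 + n) * ((1 + b * t) ^ rbExponent n ρ) ^ 2) := by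
    intro t
    rw [hS, ← sum_Icc_one_div_mul_eq n hprod]
    refine sum_congr rfl fun k hk => ?_
    rw [hg k (hmem k hk).1, hg (k + n) (hmem k hk).2]
    rfl
  refine ⟨fun i hi t ht => ?_, fun t ht => ?_⟩
  · obtain ⟨hi₁, hi₂⟩ := hmem i hi
    have hpair : a i * a (i + n) = a 1 * a (1 + n) := add_comm n i ▸ hprod i hi
    rw [hgN' t, hS' t, funext (hg i hi₁), funext (hg (i + n) hi₂)]
    exact ⟨hasDerivAt_rb_component (ha i hi₁).ne' (ha (i + n) hi₂).ne' hpair hD hb (hu t ht),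
      hasDerivAt_rb_component (ha (i + n) hi₂).ne' (ha i hi₁).ne' ((mul_comm _ _).trans hpair)
        hD hb (hu t ht)⟩
  · rw [hS' t, funext hgN']
    exact hasDerivAt_rb_gN hA.ne' hD hb (hu t ht)
end

section
/- With the explicit Heisenberg solution g_j(t) = a (1+bt)^{(1-nρ)/(n+2-nρ)} (1 ≤ j ≤ 2n), g_N(t) = a² (1+bt)^{(n+nρ)/(nρ-n-2)} where g_N(0) = g_i(0) g_{n+i}(0) = a² and b = (n+2-nρ), the quantity g_N(t)/(g_i(t) g_{n+i}(t)) equals 1/((n+2-nρ)t + 1) for each i; in particular for t > 0 it is strictly less than 1, so the relation g_N = g_i g_{n+i} (Heisenberg type) fails for t > 0. -/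
/-! The factors `a` cancel, and the exponent of `1 + bt` in `g_N / (g_i g_{n+i})` collapses to
`-1`, since with `c = n + 2 - nρ` it equals `-(n + nρ)/c - 2(1 - nρ)/c = -c/c`. -/

lemma sq_mul_rpow_div_mul_rpow_sq {a y : ℝ} (ha : a ≠ 0) (hy : 0 < y) (p q : ℝ) :
    a ^ 2 * y ^ p / ((a * y ^ q) * (a * y ^ q)) = y ^ (p - 2 * q) := by
  rw [mul_mul_mul_comm, ← sq, mul_div_mul_left _ _ (pow_ne_zero 2 ha), ← Real.rpow_add hy,
    ← Real.rpow_sub hy, two_mul]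

lemma div_sub_two_mul_div_eq_neg_one {m x : ℝ} (h : m + 2 - x ≠ 0) :
    (m + x) / (x - m - 2) - 2 * ((1 - x) / (m + 2 - x)) = -1 := by
  have h' : x - m - 2 ≠ 0 := fun h0 => h (by linarith)
  field_simp
  ring

theorem heisenberg_type_not_preserved_general (n : ℕ) (ρ : ℝ)
    (hnρ : (0 : ℝ) < n + 2 - n * ρ) (a : ℝ) (ha : 0 < a)
    (b : ℝ) (hb : b = n + 2 - n * ρ) :
    ∀ t ∈ Set.Ici (0 : ℝ),
      (a ^ 2 * (1 + b * t) ^ ((n + n * ρ) / (n * ρ - n - 2))) /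
          ((a * (1 + b * t) ^ ((1 - n * ρ) / (n + 2 - n * ρ))) *
            (a * (1 + b * t) ^ ((1 - n * ρ) / (n + 2 - n * ρ))))
        = 1 / ((n + 2 - n * ρ) * t + 1) ∧
      (0 < t →
        (a ^ 2 * (1 + b * t) ^ ((n + n * ρ) / (n * ρ - n - 2))) /
            ((a * (1 + b * t) ^ ((1 - n * ρ) / (n + 2 - n * ρ))) *
              (a * (1 + b * t) ^ ((1 - n * ρ) / (n + 2 - n * ρ)))) < 1) := by
  intro t (ht : 0 ≤ t)
  have hbt : 0 < 1 + b * t := by nlinarith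
  have hratio :
      (a ^ 2 * (1 + b * t) ^ ((n + n * ρ) / (n * ρ - n - 2))) /
          ((a * (1 + b * t) ^ ((1 - n * ρ) / (n + 2 - n * ρ))) *
            (a * (1 + b * t) ^ ((1 - n * ρ) / (n + 2 - n * ρ))))
        = 1 / ((n + 2 - n * ρ) * t + 1) := by
    rw [sq_mul_rpow_div_mul_rpow_sq ha.ne' hbt, div_sub_two_mul_div_eq_neg_one hnρ.ne',
      Real.rpow_neg_one, ← one_div, hb, add_comm]
  refine ⟨hratio, fun htpos => ?_⟩
  rw [hratio, div_lt_one (by nlinarith)]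
  nlinarith

/-- For the explicit Heisenberg solution with `g_N(0) = g_i(0) g_{n+i}(0) = a²` and
`b = n + 2 - nρ`, the ratio `g_N/(g_i g_{n+i})` equals `1/((n+2-nρ)t + 1)`, hence
is `< 1` for `t > 0` (failure of Heisenberg type). -/
theorem heisenberg_type_not_preserved (n : ℕ) (hn : 1 ≤ n) (ρ : ℝ)
    (hnρ : (0 : ℝ) < n + 2 - n * ρ) (a : ℝ) (ha : 0 < a)
    (b : ℝ) (hb : b = n + 2 - n * ρ) :
    ∀ t ∈ Set.Ici (0 : ℝ),
      (a ^ 2 * (1 + b * t) ^ ((n + n * ρ) / (n * ρ - n - 2))) /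
          ((a * (1 + b * t) ^ ((1 - n * ρ) / (n + 2 - n * ρ))) *
            (a * (1 + b * t) ^ ((1 - n * ρ) / (n + 2 - n * ρ))))
        = 1 / ((n + 2 - n * ρ) * t + 1) ∧
      (0 < t →
        (a ^ 2 * (1 + b * t) ^ ((n + n * ρ) / (n * ρ - n - 2))) /
            ((a * (1 + b * t) ^ ((1 - n * ρ) / (n + 2 - n * ρ))) *
              (a * (1 + b * t) ^ ((1 - n * ρ) / (n + 2 - n * ρ)))) < 1) :=
  heisenberg_type_not_preserved_general n ρ hnρ a ha b hb
end

section
/- Let g_1,...,g_{4n}, h_1, h_2, h_3 : [0,T) → ℝ be positive differentiable functions satisfying the quaternionic Ricci-Bourguignon flow system (with parameter ρ, ρ ≠ -1/3). Then the quantity g_1(t)···g_{4n}(t)·(h_1(t) h_2(t) h_3(t))^{2(1-2nρ)/(1+3ρ)} is constant in t. -/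
/-!
Put `α = 2(1 - 2nρ)/(1 + 3ρ)` and `L = Σ_j log g_j + α (log h_1 + log h_2 + log h_3)`, so that the
conserved quantity is `exp L`. Within each block `(g_i, g_{n+i}, g_{2n+i}, g_{3n+i})` the
logarithmic derivatives add up to `2 (h_1 A_1 + h_2 A_2 + h_3 A_3) - 4ρΣ'`, where the `A_k` are the
`i`-th summands of `Σ_k`; summing over `i` gives `(Σ_j log g_j)' = (2 - 4nρ) Σ'`. On the other side
`(log h_k)' = -h_k Σ_k - ρΣ'`, so `(log h_1 + log h_2 + log h_3)' = -(1 + 3ρ) Σ'`, and `α` is exactly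
the factor making the two contributions cancel: `L' = 0`.
-/

open Finset Real

theorem Finset.sum_Icc_one_four_mul {M : Type*} [AddCommMonoid M] (f : ℕ → M) (n : ℕ) :
    ∑ j ∈ Icc 1 (4 * n), f j = ∑ i ∈ Icc 1 n, (f i + f (n + i) + f (2 * n + i) + f (3 * n + i)) := by
  have hIcc : ∀ (φ : ℕ → M) m, ∑ j ∈ Icc 1 m, φ j = ∑ k ∈ range m, φ (1 + k) := fun φ m => by
    rw [← Ico_add_one_right_eq_Icc, sum_Ico_eq_sum_range, Nat.add_sub_cancel]
  rw [hIcc, hIcc, show 4 * n = n + n + n + n by ring, sum_range_add, sum_range_add,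
    sum_range_add, sum_add_distrib, sum_add_distrib, sum_add_distrib]
  ring_nf

theorem eq_left_of_hasDerivAt_zero_on_Ico {f : ℝ → ℝ} {a b : ℝ}
    (hf : ∀ x ∈ Set.Ico a b, HasDerivAt f 0 x) : ∀ x ∈ Set.Ico a b, f x = f a := by
  intro x hx
  have hcont : ContinuousOn f (Set.Icc a x) := fun y hy =>
    (hf y ⟨hy.1, hy.2.trans_lt hx.2⟩).continuousAt.continuousWithinAt
  exact constant_of_has_deriv_right_zero hcont
    (fun y hy => (hf y ⟨hy.1, hy.2.trans hx.2⟩).hasDerivWithinAt) x ⟨hx.1, le_rfl⟩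

/-- Here `a, b, c, d` stand for `g_i, g_{n+i}, g_{2n+i}, g_{3n+i}`, `u, v, w` for `h_1, h_2, h_3`
and `s` for `Σ'`. -/
theorem hasDerivAt_log_quaternion_block {a b c d : ℝ → ℝ} {t u v w ρ s : ℝ}
    (ha : HasDerivAt a (u / b t + w / c t + v / d t - ρ * a t * s) t)
    (hb : HasDerivAt b (u / a t + v / c t + w / d t - ρ * b t * s) t)
    (hc : HasDerivAt c (w / a t + v / b t + u / d t - ρ * c t * s) t)
    (hd : HasDerivAt d (v / a t + w / b t + u / c t - ρ * d t * s) t)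
    (ha0 : a t ≠ 0) (hb0 : b t ≠ 0) (hc0 : c t ≠ 0) (hd0 : d t ≠ 0) :
    HasDerivAt (fun τ => log (a τ) + log (b τ) + log (c τ) + log (d τ))
      (2 * u * (1 / (a t * b t) + 1 / (c t * d t)) + 2 * v * (1 / (a t * d t) + 1 / (b t * c t))
        + 2 * w * (1 / (a t * c t) + 1 / (b t * d t)) - 4 * ρ * s) t := by
  refine ((((ha.log ha0).add (hb.log hb0)).add (hc.log hc0)).add (hd.log hd0)).congr_deriv ?_
  field_simp
  ring

theorem hasDerivAt_log_of_riccati {h : ℝ → ℝ} {t S ρ s : ℝ}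
    (hh : HasDerivAt h (-(h t) ^ 2 * S - ρ * h t * s) t) (h0 : h t ≠ 0) :
    HasDerivAt (fun τ => log (h τ)) (-(h t * S) - ρ * s) t := by
  refine (hh.log h0).congr_deriv ?_
  field_simp

theorem quaternion_RB_conserved_general (n : ℕ) (T ρ : ℝ)
    (hρ : ρ ≠ -1/3)
    (g : ℕ → ℝ → ℝ) (h1 h2 h3 : ℝ → ℝ) (S1 S2 S3 S' : ℝ → ℝ)
    (hS1 : ∀ t, S1 t = ∑ i ∈ Finset.Icc 1 n,
      (1 / (g i t * g (n + i) t) + 1 / (g (2*n + i) t * g (3*n + i) t)))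
    (hS2 : ∀ t, S2 t = ∑ i ∈ Finset.Icc 1 n,
      (1 / (g i t * g (3*n + i) t) + 1 / (g (n + i) t * g (2*n + i) t)))
    (hS3 : ∀ t, S3 t = ∑ i ∈ Finset.Icc 1 n,
      (1 / (g i t * g (2*n + i) t) + 1 / (g (n + i) t * g (3*n + i) t)))
    (hS' : ∀ t, S' t = h1 t * S1 t + h2 t * S2 t + h3 t * S3 t)
    (hpos : ∀ j ∈ Finset.Icc 1 (4 * n), ∀ t ∈ Set.Ico (0 : ℝ) T, 0 < g j t)
    (hpos1 : ∀ t ∈ Set.Ico (0 : ℝ) T, 0 < h1 t)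
    (hpos2 : ∀ t ∈ Set.Ico (0 : ℝ) T, 0 < h2 t)
    (hpos3 : ∀ t ∈ Set.Ico (0 : ℝ) T, 0 < h3 t)
    (hode1 : ∀ i ∈ Finset.Icc 1 n, ∀ t ∈ Set.Ico (0 : ℝ) T,
      HasDerivAt (g i)
        (h1 t / g (n + i) t + h3 t / g (2*n + i) t + h2 t / g (3*n + i) t
          - ρ * g i t * S' t) t)
    (hode2 : ∀ i ∈ Finset.Icc 1 n, ∀ t ∈ Set.Ico (0 : ℝ) T,
      HasDerivAt (g (n + i))
        (h1 t / g i t + h2 t / g (2*n + i) t + h3 t / g (3*n + i) t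
          - ρ * g (n + i) t * S' t) t)
    (hode3 : ∀ i ∈ Finset.Icc 1 n, ∀ t ∈ Set.Ico (0 : ℝ) T,
      HasDerivAt (g (2*n + i))
        (h3 t / g i t + h2 t / g (n + i) t + h1 t / g (3*n + i) t
          - ρ * g (2*n + i) t * S' t) t)
    (hode4 : ∀ i ∈ Finset.Icc 1 n, ∀ t ∈ Set.Ico (0 : ℝ) T,
      HasDerivAt (g (3*n + i))
        (h2 t / g i t + h3 t / g (n + i) t + h1 t / g (2*n + i) t
          - ρ * g (3*n + i) t * S' t) t)
    (hodeh1 : ∀ t ∈ Set.Ico (0 : ℝ) T,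
      HasDerivAt h1 (-(h1 t) ^ 2 * S1 t - ρ * h1 t * S' t) t)
    (hodeh2 : ∀ t ∈ Set.Ico (0 : ℝ) T,
      HasDerivAt h2 (-(h2 t) ^ 2 * S2 t - ρ * h2 t * S' t) t)
    (hodeh3 : ∀ t ∈ Set.Ico (0 : ℝ) T,
      HasDerivAt h3 (-(h3 t) ^ 2 * S3 t - ρ * h3 t * S' t) t) :
    ∀ t ∈ Set.Ico (0 : ℝ) T,
      (∏ j ∈ Finset.Icc 1 (4 * n), g j t) *
          (h1 t * h2 t * h3 t) ^ (2 * (1 - 2 * (n : ℝ) * ρ) / (1 + 3 * ρ))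
        = (∏ j ∈ Finset.Icc 1 (4 * n), g j 0) *
            (h1 0 * h2 0 * h3 0) ^ (2 * (1 - 2 * (n : ℝ) * ρ) / (1 + 3 * ρ)) := by
  set α := 2 * (1 - 2 * (n : ℝ) * ρ) / (1 + 3 * ρ)
  have hα : α * (1 + 3 * ρ) = 2 * (1 - 2 * n * ρ) :=
    div_mul_cancel₀ _ (by contrapose! hρ; linarith)
  set L : ℝ → ℝ := fun τ => ∑ i ∈ Icc 1 n, (log (g i τ) + log (g (n + i) τ)
      + log (g (2 * n + i) τ) + log (g (3 * n + i) τ))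
    + α * (log (h1 τ) + log (h2 τ) + log (h3 τ))
  have hmem : ∀ i ∈ Icc 1 n, i ∈ Icc 1 (4 * n) ∧ n + i ∈ Icc 1 (4 * n)
      ∧ 2 * n + i ∈ Icc 1 (4 * n) ∧ 3 * n + i ∈ Icc 1 (4 * n) := by
    intro i hi
    simp only [mem_Icc] at hi ⊢
    omega
  have hexp : ∀ t ∈ Set.Ico 0 T, (∏ j ∈ Icc 1 (4 * n), g j t) * (h1 t * h2 t * h3 t) ^ α
      = exp (L t) := by
    intro t ht
    have p1 := hpos1 t ht
    have p2 := hpos2 t ht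
    have p3 := hpos3 t ht
    rw [exp_add, ← sum_Icc_one_four_mul fun j => log (g j t),
      ← log_prod fun j hj => (hpos j hj t ht).ne', exp_log (prod_pos fun j hj => hpos j hj t ht),
      rpow_def_of_pos (by positivity), log_mul (by positivity) p3.ne', log_mul p1.ne' p2.ne',
      mul_comm α]
  have hL : ∀ t ∈ Set.Ico 0 T, HasDerivAt L 0 t := by
    intro t ht
    have hg : ∀ j ∈ Icc 1 (4 * n), g j t ≠ 0 := fun j hj => (hpos j hj t ht).ne'
    have hlog_g := HasDerivAt.fun_sum fun i hi => by
      obtain ⟨m1, m2, m3, m4⟩ := hmem i hi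
      exact hasDerivAt_log_quaternion_block (hode1 i hi t ht) (hode2 i hi t ht)
        (hode3 i hi t ht) (hode4 i hi t ht) (hg _ m1) (hg _ m2) (hg _ m3) (hg _ m4)
    have hlog_h := ((((hasDerivAt_log_of_riccati (hodeh1 t ht) (hpos1 t ht).ne').add
      (hasDerivAt_log_of_riccati (hodeh2 t ht) (hpos2 t ht).ne')).add
      (hasDerivAt_log_of_riccati (hodeh3 t ht) (hpos3 t ht).ne')).const_mul α)
    refine (hlog_g.add hlog_h).congr_deriv ?_
    simp only [sum_sub_distrib, sum_add_distrib, ← mul_sum, ← hS1, ← hS2, ← hS3, sum_const,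
      Nat.card_Icc, Nat.add_sub_cancel, nsmul_eq_mul]
    linear_combination (-S' t) * hα + (α - 2) * hS' t
  intro t ht
  rw [hexp t ht, hexp 0 ⟨le_rfl, ht.1.trans_lt ht.2⟩,
    eq_left_of_hasDerivAt_zero_on_Ico hL t ht]

/-- Ricci-Bourguignon flow on the quaternion group `Q_n`:
`g_1 ⋯ g_{4n} (h_1 h_2 h_3)^{2(1-2nρ)/(1+3ρ)}` is constant along the flow. -/
theorem quaternion_RB_conserved (n : ℕ) (hn : 1 ≤ n) (T ρ : ℝ) (hT : 0 < T)
    (hρ : ρ ≠ -1/3)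
    (g : ℕ → ℝ → ℝ) (h1 h2 h3 : ℝ → ℝ) (S1 S2 S3 S' : ℝ → ℝ)
    (hS1 : ∀ t, S1 t = ∑ i ∈ Finset.Icc 1 n,
      (1 / (g i t * g (n + i) t) + 1 / (g (2*n + i) t * g (3*n + i) t)))
    (hS2 : ∀ t, S2 t = ∑ i ∈ Finset.Icc 1 n,
      (1 / (g i t * g (3*n + i) t) + 1 / (g (n + i) t * g (2*n + i) t)))
    (hS3 : ∀ t, S3 t = ∑ i ∈ Finset.Icc 1 n,
      (1 / (g i t * g (2*n + i) t) + 1 / (g (n + i) t * g (3*n + i) t)))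
    (hS' : ∀ t, S' t = h1 t * S1 t + h2 t * S2 t + h3 t * S3 t)
    (hpos : ∀ j ∈ Finset.Icc 1 (4 * n), ∀ t ∈ Set.Ico (0 : ℝ) T, 0 < g j t)
    (hpos1 : ∀ t ∈ Set.Ico (0 : ℝ) T, 0 < h1 t)
    (hpos2 : ∀ t ∈ Set.Ico (0 : ℝ) T, 0 < h2 t)
    (hpos3 : ∀ t ∈ Set.Ico (0 : ℝ) T, 0 < h3 t)
    (hode1 : ∀ i ∈ Finset.Icc 1 n, ∀ t ∈ Set.Ico (0 : ℝ) T,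
      HasDerivAt (g i)
        (h1 t / g (n + i) t + h3 t / g (2*n + i) t + h2 t / g (3*n + i) t
          - ρ * g i t * S' t) t)
    (hode2 : ∀ i ∈ Finset.Icc 1 n, ∀ t ∈ Set.Ico (0 : ℝ) T,
      HasDerivAt (g (n + i))
        (h1 t / g i t + h2 t / g (2*n + i) t + h3 t / g (3*n + i) t
          - ρ * g (n + i) t * S' t) t)
    (hode3 : ∀ i ∈ Finset.Icc 1 n, ∀ t ∈ Set.Ico (0 : ℝ) T,
      HasDerivAt (g (2*n + i))
        (h3 t / g i t + h2 t / g (n + i) t + h1 t / g (3*n + i) t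
          - ρ * g (2*n + i) t * S' t) t)
    (hode4 : ∀ i ∈ Finset.Icc 1 n, ∀ t ∈ Set.Ico (0 : ℝ) T,
      HasDerivAt (g (3*n + i))
        (h2 t / g i t + h3 t / g (n + i) t + h1 t / g (2*n + i) t
          - ρ * g (3*n + i) t * S' t) t)
    (hodeh1 : ∀ t ∈ Set.Ico (0 : ℝ) T,
      HasDerivAt h1 (-(h1 t) ^ 2 * S1 t - ρ * h1 t * S' t) t)
    (hodeh2 : ∀ t ∈ Set.Ico (0 : ℝ) T,
      HasDerivAt h2 (-(h2 t) ^ 2 * S2 t - ρ * h2 t * S' t) t)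
    (hodeh3 : ∀ t ∈ Set.Ico (0 : ℝ) T,
      HasDerivAt h3 (-(h3 t) ^ 2 * S3 t - ρ * h3 t * S' t) t) :
    ∀ t ∈ Set.Ico (0 : ℝ) T,
      (∏ j ∈ Finset.Icc 1 (4 * n), g j t) *
          (h1 t * h2 t * h3 t) ^ (2 * (1 - 2 * (n : ℝ) * ρ) / (1 + 3 * ρ))
        = (∏ j ∈ Finset.Icc 1 (4 * n), g j 0) *
            (h1 0 * h2 0 * h3 0) ^ (2 * (1 - 2 * (n : ℝ) * ρ) / (1 + 3 * ρ)) :=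
  quaternion_RB_conserved_general n T ρ hρ g h1 h2 h3 S1 S2 S3 S' hS1 hS2 hS3 hS' hpos hpos1 hpos2
    hpos3 hode1 hode2 hode3 hode4 hodeh1 hodeh2 hodeh3
end

section
/- Fix n ≥ 1 and real ρ with 6 + 2n - 6nρ > 0. Let a > 0, d > 0, and set c = (6+2n-6nρ)·d/a². Then g_j(t) = a(1+ct)^{3(1-2nρ)/(6+2n-6nρ)} for 1 ≤ j ≤ 4n and h_k(t) = d(1+ct)^{-n(1+3ρ)/(3+n-3nρ)} for k = 1,2,3 solve the quaternionic Ricci-Bourguignon flow system on [0,∞). -/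
/-!
With all `g_j` equal to one function `G` and all `h_k` equal to one function `H`, every
`Σ_k` is `2n / G²` and `Σ' = 6n H / G²`, so the system collapses to the two equations
`G' = (3 - 6nρ) H / G` and `H' = -2n(1 + 3ρ) (H / G)²`. For `G = a X ^ p`, `H = d X ^ q` with
`X = 1 + c t`, the relation `q = 2p - 1` makes both sides of each equation multiples of the
same power of `X`, and the choice of `c` matches the coefficients.
-/

open Finset

lemma hasDerivAt_mul_one_add_mul_rpow (K c p : ℝ) {t : ℝ} (ht : 0 < 1 + c * t) :
    HasDerivAt (fun s => K * (1 + c * s) ^ p) (K * (c * p * (1 + c * t) ^ (p - 1))) t :=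
  ((((hasDerivAt_id t).const_mul c).const_add 1).rpow_const (Or.inl ht.ne')).const_mul K
    |>.congr_deriv (by simp [mul_assoc])

section PowerLaw

variable {α β a c d p q t : ℝ}

lemma hasDerivAt_powerLaw_left (ha : a ≠ 0) (hq : q = 2 * p - 1) (hp : a ^ 2 * c * p = α * d)
    (ht : 0 < 1 + c * t) :
    HasDerivAt (fun s => a * (1 + c * s) ^ p)
      (α * (d * (1 + c * t) ^ q) / (a * (1 + c * t) ^ p)) t := by
  convert hasDerivAt_mul_one_add_mul_rpow a c p ht using 1
  have hXq : (1 + c * t) ^ q = (1 + c * t) ^ (p - 1) * (1 + c * t) ^ p := by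
    rw [← Real.rpow_add ht]; congr 1; linarith
  have hXp : (1 + c * t) ^ p ≠ 0 := (Real.rpow_pos_of_pos ht p).ne'
  rw [hXq]
  field_simp
  linear_combination hp.symm

lemma hasDerivAt_powerLaw_right (ha : a ≠ 0) (hq : q = 2 * p - 1)
    (hq' : a ^ 2 * c * q = -β * d) (ht : 0 < 1 + c * t) :
    HasDerivAt (fun s => d * (1 + c * s) ^ q)
      (-β * (d * (1 + c * t) ^ q / (a * (1 + c * t) ^ p)) ^ 2) t := by
  convert hasDerivAt_mul_one_add_mul_rpow d c q ht using 1
  have hXq : (1 + c * t) ^ q * (1 + c * t) ^ q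
      = (1 + c * t) ^ (q - 1) * ((1 + c * t) ^ p * (1 + c * t) ^ p) := by
    simp only [← Real.rpow_add ht]; congr 1; linarith
  have hXp : (1 + c * t) ^ p ≠ 0 := (Real.rpow_pos_of_pos ht p).ne'
  rw [div_pow, mul_pow, mul_pow, sq ((1 + c * t) ^ q), hXq]
  field_simp
  linear_combination d * hq'.symm

end PowerLaw

lemma quaternion_RB_exponents {n ρ a c d : ℝ} (hD : 0 < 6 + 2 * n - 6 * n * ρ)
    (hc : c = (6 + 2 * n - 6 * n * ρ) * d / a ^ 2) (ha : a ≠ 0) :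
    -(n * (1 + 3 * ρ)) / (3 + n - 3 * n * ρ)
        = 2 * (3 * (1 - 2 * n * ρ) / (6 + 2 * n - 6 * n * ρ)) - 1 ∧
      a ^ 2 * c * (3 * (1 - 2 * n * ρ) / (6 + 2 * n - 6 * n * ρ)) = (3 - 6 * n * ρ) * d ∧
      a ^ 2 * c * (-(n * (1 + 3 * ρ)) / (3 + n - 3 * n * ρ)) = -(2 * n * (1 + 3 * ρ)) * d := by
  have hE : 3 + n - 3 * n * ρ ≠ 0 := by linarith
  have hp := div_mul_cancel₀ (3 * (1 - 2 * n * ρ)) hD.ne'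
  have hq := div_mul_cancel₀ (-(n * (1 + 3 * ρ))) hE
  have hca : c * a ^ 2 = (6 + 2 * n - 6 * n * ρ) * d := by rw [hc]; field_simp
  refine ⟨mul_right_cancel₀ hE ?_, ?_, ?_⟩
  · linear_combination hq - hp
  · linear_combination 3 * (1 - 2 * n * ρ) / (6 + 2 * n - 6 * n * ρ) * hca + d * hp
  · linear_combination -(n * (1 + 3 * ρ)) / (3 + n - 3 * n * ρ) * hca + 2 * d * hq

lemma eq_on_quaternion_blocks {X : Type*} {f : ℕ → X} {x : X} {n i : ℕ}
    (hf : ∀ j ∈ Icc 1 (4 * n), f j = x) (hi : i ∈ Icc 1 n) :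
    f i = x ∧ f (n + i) = x ∧ f (2 * n + i) = x ∧ f (3 * n + i) = x := by
  simp only [mem_Icc] at hf hi
  exact ⟨hf _ ⟨by omega, by omega⟩, hf _ ⟨by omega, by omega⟩, hf _ ⟨by omega, by omega⟩,
    hf _ ⟨by omega, by omega⟩⟩

lemma sum_Icc_one_div_mul_add_one_div_mul_of_forall_eq {n : ℕ} {f₁ f₂ f₃ f₄ : ℕ → ℝ} {x : ℝ}
    (h : ∀ i ∈ Icc 1 n, f₁ i = x ∧ f₂ i = x ∧ f₃ i = x ∧ f₄ i = x) :
    ∑ i ∈ Icc 1 n, (1 / (f₁ i * f₂ i) + 1 / (f₃ i * f₄ i)) = n * (2 / x ^ 2) := by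
  rw [sum_eq_card_nsmul (b := 2 / x ^ 2) fun i hi => by
    obtain ⟨h₁, h₂, h₃, h₄⟩ := h i hi; rw [h₁, h₂, h₃, h₄]; ring]
  simp

lemma quaternion_sigmas_of_forall_eq {n : ℕ} {f : ℕ → ℝ} {x : ℝ}
    (hf : ∀ j ∈ Icc 1 (4 * n), f j = x) :
    ∑ i ∈ Icc 1 n, (1 / (f i * f (n + i)) + 1 / (f (2 * n + i) * f (3 * n + i)))
        = n * (2 / x ^ 2) ∧
      ∑ i ∈ Icc 1 n, (1 / (f i * f (3 * n + i)) + 1 / (f (n + i) * f (2 * n + i)))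
        = n * (2 / x ^ 2) ∧
      ∑ i ∈ Icc 1 n, (1 / (f i * f (2 * n + i)) + 1 / (f (n + i) * f (3 * n + i)))
        = n * (2 / x ^ 2) := by
  refine ⟨?_, ?_, ?_⟩ <;>
  exact sum_Icc_one_div_mul_add_one_div_mul_of_forall_eq fun i hi => by
    obtain ⟨e₀, e₁, e₂, e₃⟩ := eq_on_quaternion_blocks hf hi; simp [e₀, e₁, e₂, e₃]

theorem quaternion_RB_explicit_solution_general (n : ℕ) (ρ : ℝ)
    (hnρ : (0 : ℝ) < 6 + 2 * n - 6 * n * ρ)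
    (a d : ℝ) (ha : 0 < a) (hd : 0 < d)
    (c : ℝ) (hc : c = (6 + 2 * n - 6 * n * ρ) * d / a ^ 2)
    (g : ℕ → ℝ → ℝ) (h1 h2 h3 : ℝ → ℝ) (S1 S2 S3 S' : ℝ → ℝ)
    (hg : ∀ j ∈ Finset.Icc 1 (4 * n), ∀ t,
      g j t = a * (1 + c * t) ^ (3 * (1 - 2 * n * ρ) / (6 + 2 * n - 6 * n * ρ)))
    (hh1 : ∀ t, h1 t = d * (1 + c * t) ^ (-(n * (1 + 3 * ρ)) / (3 + n - 3 * n * ρ)))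
    (hh2 : ∀ t, h2 t = d * (1 + c * t) ^ (-(n * (1 + 3 * ρ)) / (3 + n - 3 * n * ρ)))
    (hh3 : ∀ t, h3 t = d * (1 + c * t) ^ (-(n * (1 + 3 * ρ)) / (3 + n - 3 * n * ρ)))
    (hS1 : ∀ t, S1 t = ∑ i ∈ Finset.Icc 1 n,
      (1 / (g i t * g (n + i) t) + 1 / (g (2*n + i) t * g (3*n + i) t)))
    (hS2 : ∀ t, S2 t = ∑ i ∈ Finset.Icc 1 n,
      (1 / (g i t * g (3*n + i) t) + 1 / (g (n + i) t * g (2*n + i) t)))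
    (hS3 : ∀ t, S3 t = ∑ i ∈ Finset.Icc 1 n,
      (1 / (g i t * g (2*n + i) t) + 1 / (g (n + i) t * g (3*n + i) t)))
    (hS' : ∀ t, S' t = h1 t * S1 t + h2 t * S2 t + h3 t * S3 t) :
    (∀ i ∈ Finset.Icc 1 n, ∀ t ∈ Set.Ici (0 : ℝ),
      HasDerivAt (g i)
        (h1 t / g (n + i) t + h3 t / g (2*n + i) t + h2 t / g (3*n + i) t
          - ρ * g i t * S' t) t ∧
      HasDerivAt (g (n + i))
        (h1 t / g i t + h2 t / g (2*n + i) t + h3 t / g (3*n + i) t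
          - ρ * g (n + i) t * S' t) t ∧
      HasDerivAt (g (2*n + i))
        (h3 t / g i t + h2 t / g (n + i) t + h1 t / g (3*n + i) t
          - ρ * g (2*n + i) t * S' t) t ∧
      HasDerivAt (g (3*n + i))
        (h2 t / g i t + h3 t / g (n + i) t + h1 t / g (2*n + i) t
          - ρ * g (3*n + i) t * S' t) t) ∧
    (∀ t ∈ Set.Ici (0 : ℝ),
      HasDerivAt h1 (-(h1 t) ^ 2 * S1 t - ρ * h1 t * S' t) t ∧
      HasDerivAt h2 (-(h2 t) ^ 2 * S2 t - ρ * h2 t * S' t) t ∧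
      HasDerivAt h3 (-(h3 t) ^ 2 * S3 t - ρ * h3 t * S' t) t) := by
  obtain ⟨hqp, hcp, hcq⟩ := quaternion_RB_exponents (n := (n : ℝ)) hnρ hc ha.ne'
  set p : ℝ := 3 * (1 - 2 * n * ρ) / (6 + 2 * n - 6 * n * ρ)
  set q : ℝ := -(n * (1 + 3 * ρ)) / (3 + n - 3 * n * ρ)
  set G : ℝ → ℝ := fun s => a * (1 + c * s) ^ p
  set H : ℝ → ℝ := fun s => d * (1 + c * s) ^ q
  have hX : ∀ t ∈ Set.Ici (0 : ℝ), 0 < 1 + c * t := fun t ht =>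
    add_pos_of_pos_of_nonneg one_pos (mul_nonneg (hc ▸ by positivity) ht)
  have hG0 : ∀ t ∈ Set.Ici (0 : ℝ), G t ≠ 0 := fun t ht =>
    mul_ne_zero ha.ne' (Real.rpow_pos_of_pos (hX t ht) p).ne'
  have hblocks : ∀ i ∈ Icc 1 n,
      g i = G ∧ g (n + i) = G ∧ g (2 * n + i) = G ∧ g (3 * n + i) = G := fun i =>
    eq_on_quaternion_blocks fun j hj => funext (hg j hj)
  obtain ⟨rfl, rfl, rfl⟩ : h1 = H ∧ h2 = H ∧ h3 = H := ⟨funext hh1, funext hh2, funext hh3⟩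
  have hsigma := fun t => quaternion_sigmas_of_forall_eq fun j hj => hg j hj t
  obtain ⟨rfl, rfl, rfl⟩ : S1 = (fun t => n * (2 / G t ^ 2)) ∧ S2 = (fun t => n * (2 / G t ^ 2)) ∧
      S3 = (fun t => n * (2 / G t ^ 2)) := ⟨funext fun t => (hS1 t).trans (hsigma t).1,
    funext fun t => (hS2 t).trans (hsigma t).2.1, funext fun t => (hS3 t).trans (hsigma t).2.2⟩
  refine ⟨fun i hi t ht => ?_, fun t ht => ?_⟩
  · obtain ⟨e₀, e₁, e₂, e₃⟩ := hblocks i hi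
    have hG' : HasDerivAt G ((3 - 6 * n * ρ) * H t / G t) t :=
      hasDerivAt_powerLaw_left ha.ne' hqp hcp (hX t ht)
    have := hG0 t ht
    rw [e₀, e₁, e₂, e₃, hS' t]
    refine ⟨?_, ?_, ?_, ?_⟩ <;> convert hG' using 1 <;> field_simp <;> ring
  · have hH' : HasDerivAt H (-(2 * n * (1 + 3 * ρ)) * (H t / G t) ^ 2) t :=
      hasDerivAt_powerLaw_right ha.ne' hqp hcq (hX t ht)
    have := hG0 t ht
    rw [hS' t]
    refine ⟨?_, ?_, ?_⟩ <;> convert hH' using 1 <;> field_simp <;> ring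

/-- The explicit power-law family solves the quaternionic Ricci-Bourguignon flow
system on `Q_n`. -/
theorem quaternion_RB_explicit_solution (n : ℕ) (hn : 1 ≤ n) (ρ : ℝ)
    (hnρ : (0 : ℝ) < 6 + 2 * n - 6 * n * ρ)
    (a d : ℝ) (ha : 0 < a) (hd : 0 < d)
    (c : ℝ) (hc : c = (6 + 2 * n - 6 * n * ρ) * d / a ^ 2)
    (g : ℕ → ℝ → ℝ) (h1 h2 h3 : ℝ → ℝ) (S1 S2 S3 S' : ℝ → ℝ)
    (hg : ∀ j ∈ Finset.Icc 1 (4 * n), ∀ t,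
      g j t = a * (1 + c * t) ^ (3 * (1 - 2 * n * ρ) / (6 + 2 * n - 6 * n * ρ)))
    (hh1 : ∀ t, h1 t = d * (1 + c * t) ^ (-(n * (1 + 3 * ρ)) / (3 + n - 3 * n * ρ)))
    (hh2 : ∀ t, h2 t = d * (1 + c * t) ^ (-(n * (1 + 3 * ρ)) / (3 + n - 3 * n * ρ)))
    (hh3 : ∀ t, h3 t = d * (1 + c * t) ^ (-(n * (1 + 3 * ρ)) / (3 + n - 3 * n * ρ)))
    (hS1 : ∀ t, S1 t = ∑ i ∈ Finset.Icc 1 n,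
      (1 / (g i t * g (n + i) t) + 1 / (g (2*n + i) t * g (3*n + i) t)))
    (hS2 : ∀ t, S2 t = ∑ i ∈ Finset.Icc 1 n,
      (1 / (g i t * g (3*n + i) t) + 1 / (g (n + i) t * g (2*n + i) t)))
    (hS3 : ∀ t, S3 t = ∑ i ∈ Finset.Icc 1 n,
      (1 / (g i t * g (2*n + i) t) + 1 / (g (n + i) t * g (3*n + i) t)))
    (hS' : ∀ t, S' t = h1 t * S1 t + h2 t * S2 t + h3 t * S3 t) :
    (∀ i ∈ Finset.Icc 1 n, ∀ t ∈ Set.Ici (0 : ℝ),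
      HasDerivAt (g i)
        (h1 t / g (n + i) t + h3 t / g (2*n + i) t + h2 t / g (3*n + i) t
          - ρ * g i t * S' t) t ∧
      HasDerivAt (g (n + i))
        (h1 t / g i t + h2 t / g (2*n + i) t + h3 t / g (3*n + i) t
          - ρ * g (n + i) t * S' t) t ∧
      HasDerivAt (g (2*n + i))
        (h3 t / g i t + h2 t / g (n + i) t + h1 t / g (3*n + i) t
          - ρ * g (2*n + i) t * S' t) t ∧
      HasDerivAt (g (3*n + i))
        (h2 t / g i t + h3 t / g (n + i) t + h1 t / g (2*n + i) t
          - ρ * g (3*n + i) t * S' t) t) ∧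
    (∀ t ∈ Set.Ici (0 : ℝ),
      HasDerivAt h1 (-(h1 t) ^ 2 * S1 t - ρ * h1 t * S' t) t ∧
      HasDerivAt h2 (-(h2 t) ^ 2 * S2 t - ρ * h2 t * S' t) t ∧
      HasDerivAt h3 (-(h3 t) ^ 2 * S3 t - ρ * h3 t * S' t) t) :=
  quaternion_RB_explicit_solution_general n ρ hnρ a d ha hd c hc g h1 h2 h3 S1 S2 S3 S' hg hh1 hh2
    hh3 hS1 hS2 hS3 hS'
end

section
/- With the explicit quaternionic solution g_j(t) = a(1+ct)^{3(1-2nρ)/(6+2n-6nρ)}, h_k(t) = a²(1+ct)^{-n(1+3ρ)/(3+n-3nρ)} where h_k(0) = g_1(0)² = a² and c = 6+2n-6nρ > 0, the quantity h_1(t)/g_1(t)² equals 1/((6+2n-6nρ)t + 1) for all t ≥ 0; in particular for t > 0 it is strictly less than 1. -/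
/-! The common factor `a²` cancels and the two powers of `1 + ct` combine into a single power
whose exponent `-n(1+3ρ)/(3+n-3nρ) - 2·3(1-2nρ)/(6+2n-6nρ)` simplifies to `-1`; so
`h₁/g₁² = (1 + ct)⁻¹`, which is `< 1` as soon as `ct > 0`. -/

theorem Real.sq_mul_rpow_div_sq_mul_rpow {a x : ℝ} (ha : a ≠ 0) (hx : 0 < x) (p q : ℝ) :
    a ^ 2 * x ^ p / (a * x ^ q) ^ 2 = x ^ (p - 2 * q) := by
  rw [mul_pow, mul_div_mul_left _ _ (pow_ne_zero 2 ha), ← Real.rpow_natCast,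
    ← Real.rpow_mul hx.le, ← Real.rpow_sub hx]
  norm_num [mul_comm]

theorem quaternion_exponent_sub_eq_neg_one {n ρ : ℝ} (h : 3 + n - 3 * n * ρ ≠ 0) :
    -(n * (1 + 3 * ρ)) / (3 + n - 3 * n * ρ)
      - 2 * (3 * (1 - 2 * n * ρ) / (6 + 2 * n - 6 * n * ρ)) = -1 := by
  rw [show 6 + 2 * n - 6 * n * ρ = 2 * (3 + n - 3 * n * ρ) by ring, ← mul_div_assoc,
    mul_div_mul_left _ _ two_ne_zero, div_sub_div_same, div_eq_iff h]
  ring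

theorem quaternion_type_not_preserved_general (n : ℕ) (ρ : ℝ)
    (hnρ : (0 : ℝ) < 6 + 2 * n - 6 * n * ρ) (a : ℝ) (ha : 0 < a)
    (c : ℝ) (hc : c = 6 + 2 * n - 6 * n * ρ) :
    ∀ t ∈ Set.Ici (0 : ℝ),
      (a ^ 2 * (1 + c * t) ^ (-(n * (1 + 3 * ρ)) / (3 + n - 3 * n * ρ))) /
          (a * (1 + c * t) ^ (3 * (1 - 2 * n * ρ) / (6 + 2 * n - 6 * n * ρ))) ^ 2
        = 1 / ((6 + 2 * n - 6 * n * ρ) * t + 1) ∧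
      (0 < t →
        (a ^ 2 * (1 + c * t) ^ (-(n * (1 + 3 * ρ)) / (3 + n - 3 * n * ρ))) /
            (a * (1 + c * t) ^ (3 * (1 - 2 * n * ρ) / (6 + 2 * n - 6 * n * ρ))) ^ 2
          < 1) := by
  intro t (ht : 0 ≤ t)
  subst hc
  have hct : 0 ≤ (6 + 2 * n - 6 * n * ρ) * t := mul_nonneg hnρ.le ht
  have hD : (3 + n - 3 * n * ρ : ℝ) ≠ 0 := by linarith
  have ratio :
      a ^ 2 * (1 + (6 + 2 * n - 6 * n * ρ) * t) ^ (-(n * (1 + 3 * ρ)) / (3 + n - 3 * n * ρ)) /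
          (a * (1 + (6 + 2 * n - 6 * n * ρ) * t) ^
            (3 * (1 - 2 * n * ρ) / (6 + 2 * n - 6 * n * ρ))) ^ 2
        = 1 / ((6 + 2 * n - 6 * n * ρ) * t + 1) := by
    rw [Real.sq_mul_rpow_div_sq_mul_rpow ha.ne' (by linarith),
      quaternion_exponent_sub_eq_neg_one hD, Real.rpow_neg_one, one_div, add_comm]
  refine ⟨ratio, fun htpos => ?_⟩
  rw [ratio, div_lt_one (by linarith)]
  linarith [mul_pos hnρ htpos]

/-- For the explicit quaternionic solution with `h_k(0) = g_1(0)² = a²` and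
`c = 6 + 2n - 6nρ`, the ratio `h₁/g₁²` equals `1/((6+2n-6nρ)t + 1)`, hence is
`< 1` for `t > 0`. -/
theorem quaternion_type_not_preserved (n : ℕ) (hn : 1 ≤ n) (ρ : ℝ)
    (hnρ : (0 : ℝ) < 6 + 2 * n - 6 * n * ρ) (a : ℝ) (ha : 0 < a)
    (c : ℝ) (hc : c = 6 + 2 * n - 6 * n * ρ) :
    ∀ t ∈ Set.Ici (0 : ℝ),
      (a ^ 2 * (1 + c * t) ^ (-(n * (1 + 3 * ρ)) / (3 + n - 3 * n * ρ))) /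
          (a * (1 + c * t) ^ (3 * (1 - 2 * n * ρ) / (6 + 2 * n - 6 * n * ρ))) ^ 2
        = 1 / ((6 + 2 * n - 6 * n * ρ) * t + 1) ∧
      (0 < t →
        (a ^ 2 * (1 + c * t) ^ (-(n * (1 + 3 * ρ)) / (3 + n - 3 * n * ρ))) /
            (a * (1 + c * t) ^ (3 * (1 - 2 * n * ρ) / (6 + 2 * n - 6 * n * ρ))) ^ 2
          < 1) :=
  quaternion_type_not_preserved_general n ρ hnρ a ha c hc
end
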